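/- Consider ℝ² with coordinates (y₁,y₂) and the quadratic form q(y) = y₁y₂ of signature (1,1). Let U ⊆ ℝ² be open, b₁, b₂ : U → ℝ smooth, and define the curvature coefficients R^l_{ijk} = δ_{il}(b_j b_k − ∂_j b_k) − δ_{jl}(b_i b_k − ∂_i b_k) + δ_{kl}(∂_i b_j − ∂_j b_i). Then the conditions R^1_{122} = 0 and R^2_{121} = 0 hold on U (i.e. the first-order infinitesimal holonomies are infinitesimal similarities of q, so the connection is weakly stiff) if and only if ∂₁ b₁ = b₁² and ∂₂ b₂ = b₂² on U. Moreover, if these equations hold, if U = I × J is a product of open intervals, and if b₁ is nowhere zero on U, then there is a smooth function f₁ : J → ℝ such that f₁(y₂) − y₁ ≠ 0 and b₁(y₁,y₂) = 1/(f₁(y₂) − y₁) on U. -/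

import Mathlib

/-!
The two curvature conditions are, coefficient by coefficient, the Riccati equations
`∂₁b₁ = b₁²` and `∂₂b₂ = b₂²`. Along a line `y₂ = const` a nonvanishing solution of
`g' = g²` satisfies `(1/g)' = -1`, so `1/b₁ + y₁` has vanishing `y₁`-derivative; on a product
of intervals it is therefore a function `f₁(y₂)`, read off on the slice `y₁ = a` for any `a ∈ I`.
-/

/-- The partial derivative `∂_j f` in the direction of the `j`-th coordinate. -/
noncomputable def pder {d : ℕ} (f : (Fin d → ℝ) → ℝ) (j : Fin d) (x : Fin d → ℝ) : ℝ :=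
  fderiv ℝ f x (Pi.single j 1)

/-- The curvature coefficients `R^l_{ijk}` of the projectively flattened connection
with associated form coefficients `b_1, b_2` (indices `1, 2` are `0, 1` in Lean). -/
noncomputable def curvR {d : ℕ} (b : Fin d → (Fin d → ℝ) → ℝ) (i j k l : Fin d)
    (x : Fin d → ℝ) : ℝ :=
  (if i = l then b j x * b k x - pder (b k) j x else 0)
    - (if j = l then b i x * b k x - pder (b k) i x else 0)
    + (if k = l then pder (b j) i x - pder (b i) j x else 0)

lemma curvR_zero_one_one_zero (b : Fin 2 → (Fin 2 → ℝ) → ℝ) (x : Fin 2 → ℝ) :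
    curvR b 0 1 1 0 x = b 1 x ^ 2 - pder (b 1) 1 x := by
  simp [curvR, sq]

lemma curvR_zero_one_zero_one (b : Fin 2 → (Fin 2 → ℝ) → ℝ) (x : Fin 2 → ℝ) :
    curvR b 0 1 0 1 x = pder (b 0) 0 x - b 0 x ^ 2 := by
  simp [curvR, sq]

lemma curvR_eq_zero_iff_pder_eq_sq (b : Fin 2 → (Fin 2 → ℝ) → ℝ) (x : Fin 2 → ℝ) :
    (curvR b 0 1 1 0 x = 0 ∧ curvR b 0 1 0 1 x = 0) ↔
      (pder (b 0) 0 x = b 0 x ^ 2 ∧ pder (b 1) 1 x = b 1 x ^ 2) := by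
  rw [curvR_zero_one_one_zero, curvR_zero_one_zero_one, sub_eq_zero, sub_eq_zero, and_comm,
    eq_comm (a := b 1 x ^ 2)]

theorem DifferentiableAt.hasDerivAt_pder_update {d : ℕ} {f : (Fin d → ℝ) → ℝ} {x : Fin d → ℝ}
    {j : Fin d} {s : ℝ} (hf : DifferentiableAt ℝ f (Function.update x j s)) :
    HasDerivAt (fun s ↦ f (Function.update x j s)) (pder f j (Function.update x j s)) s :=
  hf.hasFDerivAt.comp_hasDerivAt s (hasDerivAt_update x j s)

theorem IsOpen.inv_add_eq_of_hasDerivAt_eq_sq {𝕜 : Type*} [RCLike 𝕜]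
    {g : 𝕜 → 𝕜} {I : Set 𝕜} (hI : IsOpen I) (hIc : IsPreconnected I)
    (hg : ∀ s ∈ I, HasDerivAt g (g s ^ 2) s) (hg0 : ∀ s ∈ I, g s ≠ 0) {s t : 𝕜}
    (hs : s ∈ I) (ht : t ∈ I) :
    (g s)⁻¹ + s = (g t)⁻¹ + t := by
  have hderiv : ∀ s ∈ I, HasDerivAt (fun s ↦ (g s)⁻¹ + s) 0 s := fun s hs ↦ by
    refine (((hg s hs).inv (hg0 s hs)).add (hasDerivAt_id s)).congr_deriv ?_
    field_simp [hg0 s hs]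
    ring
  exact hI.is_const_of_deriv_eq_zero hIc
    (fun s hs ↦ (hderiv s hs).differentiableAt.differentiableWithinAt)
    (fun s hs ↦ (hderiv s hs).deriv) hs ht

theorem inv_add_eq_of_pder_eq_sq {d : ℕ} {f : (Fin d → ℝ) → ℝ} {x : Fin d → ℝ} {j : Fin d}
    {I : Set ℝ} (hI : IsOpen I) (hIc : IsPreconnected I)
    (hf : ∀ s ∈ I, DifferentiableAt ℝ f (Function.update x j s))
    (hpde : ∀ s ∈ I, pder f j (Function.update x j s) = f (Function.update x j s) ^ 2)
    (hf0 : ∀ s ∈ I, f (Function.update x j s) ≠ 0) {s t : ℝ} (hs : s ∈ I) (ht : t ∈ I) :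
    (f (Function.update x j s))⁻¹ + s = (f (Function.update x j t))⁻¹ + t :=
  hI.inv_add_eq_of_hasDerivAt_eq_sq (g := fun s ↦ f (Function.update x j s)) hIc
    (fun s hs ↦ hpde s hs ▸ (hf s hs).hasDerivAt_pder_update) hf0 hs ht

theorem exists_eq_one_div_sub_of_pder_eq_sq {b₀ : (Fin 2 → ℝ) → ℝ} {I J : Set ℝ}
    (hI : IsOpen I) (hIc : I.OrdConnected) (hJ : IsOpen J)
    (hb : ContDiffOn ℝ (⊤ : ℕ∞) b₀ {x | x 0 ∈ I ∧ x 1 ∈ J})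
    (hpde : ∀ x ∈ {x : Fin 2 → ℝ | x 0 ∈ I ∧ x 1 ∈ J}, pder b₀ 0 x = b₀ x ^ 2)
    (hb0 : ∀ x ∈ {x : Fin 2 → ℝ | x 0 ∈ I ∧ x 1 ∈ J}, b₀ x ≠ 0) :
    ∃ f₁ : ℝ → ℝ, ContDiffOn ℝ (⊤ : ℕ∞) f₁ J ∧ ∀ x ∈ {x : Fin 2 → ℝ | x 0 ∈ I ∧ x 1 ∈ J},
      f₁ (x 1) - x 0 ≠ 0 ∧ b₀ x = 1 / (f₁ (x 1) - x 0) := by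
  set S : Set (Fin 2 → ℝ) := {x | x 0 ∈ I ∧ x 1 ∈ J}
  obtain rfl | ⟨a, ha⟩ := I.eq_empty_or_nonempty
  · exact ⟨0, contDiffOn_const, fun x hx ↦ absurd hx.1 (Set.notMem_empty _)⟩
  have hS : IsOpen S :=
    (hI.preimage (continuous_apply 0)).inter (hJ.preimage (continuous_apply 1))
  have hslice : ∀ t ∈ J, ![a, t] ∈ S := fun t ht ↦ ⟨ha, ht⟩
  have hconst : ∀ x ∈ S, (b₀ x)⁻¹ + x 0 = (b₀ ![a, x 1])⁻¹ + a := by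
    intro x hx
    have hline : ∀ s ∈ I, Function.update x 0 s ∈ S := fun s hs ↦ ⟨by simpa, by simpa using hx.2⟩
    have key := inv_add_eq_of_pder_eq_sq hI hIc.isPreconnected
      (fun s hs ↦ (hb.contDiffAt (hS.mem_nhds (hline s hs))).differentiableAt (by simp))
      (fun s hs ↦ hpde _ (hline s hs)) (fun s hs ↦ hb0 _ (hline s hs)) hx.1 ha
    have hxa : Function.update x 0 a = ![a, x 1] := by
      ext i; fin_cases i <;> simp
    rwa [Function.update_eq_self, hxa] at key
  refine ⟨fun t ↦ (b₀ ![a, t])⁻¹ + a, ?_, fun x hx ↦ ?_⟩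
  · have hb_slice : ContDiffOn ℝ (⊤ : ℕ∞) (fun t ↦ b₀ ![a, t]) J :=
      hb.comp (contDiff_pi.2 fun i ↦ by
        fin_cases i; exacts [contDiff_const, contDiff_id]).contDiffOn hslice
    exact (hb_slice.inv fun t ht ↦ hb0 _ (hslice t ht)).add contDiffOn_const
  · dsimp only
    rw [← hconst x hx, add_sub_cancel_right, one_div, inv_inv]
    exact ⟨inv_ne_zero (hb0 x hx), rfl⟩

theorem stmt13_general (U : Set (Fin 2 → ℝ))
    (b : Fin 2 → (Fin 2 → ℝ) → ℝ) (hb : ∀ i, ContDiffOn ℝ (⊤ : ℕ∞) (b i) U) :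
    ((∀ x ∈ U, curvR b 0 1 1 0 x = 0 ∧ curvR b 0 1 0 1 x = 0) ↔
      (∀ x ∈ U, pder (b 0) 0 x = b 0 x ^ 2 ∧ pder (b 1) 1 x = b 1 x ^ 2)) ∧
    ((∀ x ∈ U, pder (b 0) 0 x = b 0 x ^ 2 ∧ pder (b 1) 1 x = b 1 x ^ 2) →
      ∀ I J : Set ℝ, IsOpen I → I.OrdConnected → IsOpen J → J.OrdConnected →
      U = {x : Fin 2 → ℝ | x 0 ∈ I ∧ x 1 ∈ J} →
      (∀ x ∈ U, b 0 x ≠ 0) →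
      ∃ f₁ : ℝ → ℝ, ContDiffOn ℝ (⊤ : ℕ∞) f₁ J ∧
        ∀ x ∈ U, f₁ (x 1) - x 0 ≠ 0 ∧ b 0 x = 1 / (f₁ (x 1) - x 0)) := by
  refine ⟨forall₂_congr fun x _ ↦ curvR_eq_zero_iff_pder_eq_sq b x, ?_⟩
  rintro hpde I J hI hIc hJ - rfl hb0
  exact exists_eq_one_div_sub_of_pder_eq_sq hI hIc hJ (hb 0) (fun x hx ↦ (hpde x hx).1) hb0

/-- In null coordinates `(y₁,y₂)` for the signature `(1,1)` form `q(y) = y₁y₂`, weak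
stiffness (`R^1_{122} = 0` and `R^2_{121} = 0`) is equivalent to `∂₁b₁ = b₁²` and
`∂₂b₂ = b₂²`; moreover on a product of open intervals where `b₁` never vanishes,
`b₁(y₁,y₂) = 1/(f₁(y₂) − y₁)` for a smooth function `f₁` of `y₂`. -/
theorem stmt13 (U : Set (Fin 2 → ℝ)) (hU : IsOpen U)
    (b : Fin 2 → (Fin 2 → ℝ) → ℝ) (hb : ∀ i, ContDiffOn ℝ (⊤ : ℕ∞) (b i) U) :
    ((∀ x ∈ U, curvR b 0 1 1 0 x = 0 ∧ curvR b 0 1 0 1 x = 0) ↔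
      (∀ x ∈ U, pder (b 0) 0 x = b 0 x ^ 2 ∧ pder (b 1) 1 x = b 1 x ^ 2)) ∧
    ((∀ x ∈ U, pder (b 0) 0 x = b 0 x ^ 2 ∧ pder (b 1) 1 x = b 1 x ^ 2) →
      ∀ I J : Set ℝ, IsOpen I → I.OrdConnected → IsOpen J → J.OrdConnected →
      U = {x : Fin 2 → ℝ | x 0 ∈ I ∧ x 1 ∈ J} →
      (∀ x ∈ U, b 0 x ≠ 0) →
      ∃ f₁ : ℝ → ℝ, ContDiffOn ℝ (⊤ : ℕ∞) f₁ J ∧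
        ∀ x ∈ U, f₁ (x 1) - x 0 ≠ 0 ∧ b 0 x = 1 / (f₁ (x 1) - x 0)) :=
  stmt13_general U b hb
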